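/- Gluing executions across two frames: let L0 be shared between frames F1 and F2, let LEFT0, lcut0, RIGHT2 be as defined, let B_lc be a (LEFT0 ∪ lcut0)-run of F1 and B_rc a (RIGHT2 ∪ lcut0)-run of F2, and suppose they agree on lcut0, i.e. B_lc|lcut0 = B_rc|lcut0. Then there exists an execution A of F2 such that A|(LEFT0 ∪ lcut0) = B_lc and A|(RIGHT2 ∪ lcut0) = B_rc. -/
import Mathlib


open scoped Classical

/-- A (static) frame over ambient types of locations, channels and data:
a set `LO` of locations, a set `CH` of channels, sender and recipient
endpoints for channels, and for each location a prefix-closed set of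
finite-or-infinite sequences of labels `(c, v)` (represented as functions
`ℕ → Option (Chan × D)` with initial-segment domain). -/
structure Frame (Loc Chan D : Type) where
  LO : Set Loc
  CH : Set Chan
  sender : Chan → Loc
  recipt : Chan → Loc
  sender_mem : ∀ c ∈ CH, sender c ∈ LO
  recipt_mem : ∀ c ∈ CH, recipt c ∈ LO
  traces : Loc → Set (ℕ → Option (Chan × D))
  traces_dom : ∀ ℓ, ∀ t ∈ traces ℓ, ∀ m n : ℕ, m ≤ n → t n ≠ none → t m ≠ none
  traces_labels : ∀ ℓ, ∀ t ∈ traces ℓ, ∀ n c v, t n = some (c, v) →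
    c ∈ CH ∧ (sender c = ℓ ∨ recipt c = ℓ)
  traces_prefix : ∀ ℓ, ∀ t ∈ traces ℓ, ∀ n : ℕ,
    (fun m => if m < n then t m else none) ∈ traces ℓ

/-- Raw data of a system of events: a carrier set of events with a relation. -/
structure EvStruct (E : Type) where
  carrier : Set E
  rel : E → E → Prop

variable {Loc Chan D E : Type}

/-- `B` is a system of events: `rel` is a partial order on `carrier`, and every
event has only finitely many predecessors. -/
def IsSysEv (B : EvStruct E) : Prop :=
  (∀ a b, B.rel a b → a ∈ B.carrier ∧ b ∈ B.carrier) ∧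
  (∀ a ∈ B.carrier, B.rel a a) ∧
  (∀ a b, B.rel a b → B.rel b a → a = b) ∧
  (∀ a b c, B.rel a b → B.rel b c → B.rel a c) ∧
  (∀ a ∈ B.carrier, {x | B.rel x a}.Finite)

/-- The events of `B` whose channel has `ℓ` as sender or recipient. -/
def evProj (F : Frame Loc Chan D) (chan : E → Chan) (B : EvStruct E) (ℓ : Loc) :
    Set E :=
  {e | e ∈ B.carrier ∧ (F.sender (chan e) = ℓ ∨ F.recipt (chan e) = ℓ)}

/-- The projection of `B` to location `ℓ`, viewed as a sequence of labels: the
`n`-th entry is the label of the event of `evProj F chan B ℓ` having exactly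
`n` strict predecessors there. -/
noncomputable def projSeq (F : Frame Loc Chan D) (chan : E → Chan) (msg : E → D)
    (B : EvStruct E) (ℓ : Loc) : ℕ → Option (Chan × D) := fun n =>
  if h : ∃ e, e ∈ evProj F chan B ℓ ∧
      Set.ncard {e' | e' ∈ evProj F chan B ℓ ∧ B.rel e' e ∧ e' ≠ e} = n
  then some (chan h.choose, msg h.choose)
  else none

/-- `B` is an execution of `F`: a system of events on the channels of `F`
whose projection to each location of `F` is linearly ordered and, viewed as
a sequence, a trace of that location. -/
def IsExec (F : Frame Loc Chan D) (chan : E → Chan) (msg : E → D)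
    (B : EvStruct E) : Prop :=
  IsSysEv B ∧ (∀ e ∈ B.carrier, chan e ∈ F.CH) ∧
  ∀ ℓ ∈ F.LO,
    (∀ a ∈ evProj F chan B ℓ, ∀ b ∈ evProj F chan B ℓ, B.rel a b ∨ B.rel b a) ∧
    projSeq F chan msg B ℓ ∈ F.traces ℓ

/-- Restriction `B|C` of `B` to the events whose channel lies in `C`. -/
def evRestrict (chan : E → Chan) (B : EvStruct E) (C : Set Chan) : EvStruct E where
  carrier := {e | e ∈ B.carrier ∧ chan e ∈ C}
  rel := fun a b => B.rel a b ∧ chan a ∈ C ∧ chan b ∈ C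

/-- `lruns C`: the `C`-runs of `F`, i.e. restrictions to `C` of executions. -/
def lruns (F : Frame Loc Chan D) (chan : E → Chan) (msg : E → D) (C : Set Chan) :
    Set (EvStruct E) :=
  {B | ∃ A : EvStruct E, IsExec F chan msg A ∧ evRestrict chan A C = B}

/-- `J_{C→C'}(B)`: the `C'`-runs compatible with `B`, computed in `F`. -/
def cmpt (F : Frame Loc Chan D) (chan : E → Chan) (msg : E → D)
    (C C' : Set Chan) (B : EvStruct E) : Set (EvStruct E) :=
  {B' | ∃ A : EvStruct E, IsExec F chan msg A ∧
      evRestrict chan A C = B ∧ evRestrict chan A C' = B'}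

/-- `L0` is shared between `F1` and `F2`: `L0` lies in the locations of both,
and every `ℓ ∈ L0` has the same channel endpoints and trace set in both. -/
def Shared (F1 F2 : Frame Loc Chan D) (L0 : Set Loc) : Prop :=
  L0 ⊆ F1.LO ∧ L0 ⊆ F2.LO ∧
  ∀ ℓ ∈ L0,
    ({c | c ∈ F1.CH ∧ F1.sender c = ℓ} = {c | c ∈ F2.CH ∧ F2.sender c = ℓ}) ∧
    ({c | c ∈ F1.CH ∧ F1.recipt c = ℓ} = {c | c ∈ F2.CH ∧ F2.recipt c = ℓ}) ∧
    F1.traces ℓ = F2.traces ℓ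

/-- The channels of `F` with both endpoints in `L0`. -/
def LEFT0 (F : Frame Loc Chan D) (L0 : Set Loc) : Set Chan :=
  {c | c ∈ F.CH ∧ F.sender c ∈ L0 ∧ F.recipt c ∈ L0}

/-- The channels of `F` with exactly one endpoint in `L0`. -/
def lcut0 (F : Frame Loc Chan D) (L0 : Set Loc) : Set Chan :=
  {c | c ∈ F.CH ∧ Xor' (F.sender c ∈ L0) (F.recipt c ∈ L0)}

/-- The channels of `F` with no endpoint in `L0`. -/
def RIGHTchans (F : Frame Loc Chan D) (L0 : Set Loc) : Set Chan :=
  {c | c ∈ F.CH ∧ F.sender c ∉ L0 ∧ F.recipt c ∉ L0}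


/-! ### Auxiliary lemmas -/

lemma evStruct_ext {B B' : EvStruct E} (h1 : B.carrier = B'.carrier)
    (h2 : B.rel = B'.rel) : B = B' := by
  cases B; cases B'; cases h1; cases h2; rfl

lemma ncard_pred_lt {S : Set E} {r : E → E → Prop}
    (hanti : ∀ a b, r a b → r b a → a = b)
    (htr : ∀ a b c, r a b → r b c → r a c)
    {e1 e2 : E} (h1 : e1 ∈ S) (hne : e1 ≠ e2) (h12 : r e1 e2)
    (hfin : {x | x ∈ S ∧ r x e2 ∧ x ≠ e2}.Finite) :
    {x | x ∈ S ∧ r x e1 ∧ x ≠ e1}.ncard < {x | x ∈ S ∧ r x e2 ∧ x ≠ e2}.ncard := by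
  have hsub : {x | x ∈ S ∧ r x e1 ∧ x ≠ e1} ⊆ {x | x ∈ S ∧ r x e2 ∧ x ≠ e2} := by
    rintro x ⟨hxS, hx1, hxne⟩
    refine ⟨hxS, htr _ _ _ hx1 h12, ?_⟩
    rintro rfl
    exact hne (hanti _ _ h12 hx1)
  apply Set.ncard_lt_ncard _ hfin
  rw [Set.ssubset_iff_of_subset hsub]
  exact ⟨e1, ⟨h1, h12, hne⟩, fun h => h.2.2 rfl⟩

lemma count_unique {S : Set E} {r : E → E → Prop}
    (hlin : ∀ a ∈ S, ∀ b ∈ S, r a b ∨ r b a)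
    (hanti : ∀ a b, r a b → r b a → a = b)
    (htr : ∀ a b c, r a b → r b c → r a c)
    (hfin : ∀ a ∈ S, {x | x ∈ S ∧ r x a ∧ x ≠ a}.Finite)
    {e1 e2 : E} (h1 : e1 ∈ S) (h2 : e2 ∈ S)
    (hc : {x | x ∈ S ∧ r x e1 ∧ x ≠ e1}.ncard = {x | x ∈ S ∧ r x e2 ∧ x ≠ e2}.ncard) :
    e1 = e2 := by
  by_contra hne
  rcases hlin e1 h1 e2 h2 with h | h
  · exact absurd hc (Nat.ne_of_lt (ncard_pred_lt hanti htr h1 hne h (hfin e2 h2)))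
  · exact absurd hc.symm (Nat.ne_of_lt (ncard_pred_lt hanti htr h2 (Ne.symm hne) h (hfin e1 h1)))

lemma projSeq_congr {F F' : Frame Loc Chan D} {chan : E → Chan} {msg : E → D}
    {B B' : EvStruct E} {ℓ ℓ' : Loc}
    (hS : evProj F chan B ℓ = evProj F' chan B' ℓ')
    (hrel : ∀ a ∈ evProj F chan B ℓ, ∀ b ∈ evProj F chan B ℓ, (B.rel a b ↔ B'.rel a b))
    (hlin : ∀ a ∈ evProj F chan B ℓ, ∀ b ∈ evProj F chan B ℓ, B.rel a b ∨ B.rel b a)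
    (hanti : ∀ a b, B.rel a b → B.rel b a → a = b)
    (htr : ∀ a b c, B.rel a b → B.rel b c → B.rel a c)
    (hfin : ∀ a ∈ evProj F chan B ℓ, {x | B.rel x a}.Finite) :
    projSeq F chan msg B ℓ = projSeq F' chan msg B' ℓ' := by
  have hfin' : ∀ a ∈ evProj F chan B ℓ,
      {x | x ∈ evProj F chan B ℓ ∧ B.rel x a ∧ x ≠ a}.Finite := by
    intro a ha
    exact (hfin a ha).subset (fun x hx => hx.2.1)
  have hset : ∀ e ∈ evProj F chan B ℓ,
      {e' | e' ∈ evProj F chan B ℓ ∧ B.rel e' e ∧ e' ≠ e}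
        = {e' | e' ∈ evProj F' chan B' ℓ' ∧ B'.rel e' e ∧ e' ≠ e} := by
    intro e he
    ext x
    simp only [Set.mem_setOf_eq, ← hS]
    constructor
    · rintro ⟨h1, h2, h3⟩; exact ⟨h1, (hrel x h1 e he).mp h2, h3⟩
    · rintro ⟨h1, h2, h3⟩; exact ⟨h1, (hrel x h1 e he).mpr h2, h3⟩
  funext n
  have hiff : (∃ e, e ∈ evProj F chan B ℓ ∧
        Set.ncard {e' | e' ∈ evProj F chan B ℓ ∧ B.rel e' e ∧ e' ≠ e} = n)
      ↔ (∃ e, e ∈ evProj F' chan B' ℓ' ∧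
        Set.ncard {e' | e' ∈ evProj F' chan B' ℓ' ∧ B'.rel e' e ∧ e' ≠ e} = n) := by
    constructor
    · rintro ⟨e, he, hn⟩
      exact ⟨e, hS ▸ he, by rw [← hset e he]; exact hn⟩
    · rintro ⟨e, he, hn⟩
      have he' : e ∈ evProj F chan B ℓ := by rw [hS]; exact he
      exact ⟨e, he', by rw [hset e he']; exact hn⟩
  by_cases hP : ∃ e, e ∈ evProj F chan B ℓ ∧
      Set.ncard {e' | e' ∈ evProj F chan B ℓ ∧ B.rel e' e ∧ e' ≠ e} = n
  · have hP' := hiff.mp hP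
    show (if h : _ then _ else _) = (if h : _ then _ else _)
    rw [dif_pos hP, dif_pos hP']
    obtain ⟨heS, hcount⟩ := hP.choose_spec
    obtain ⟨heS', hcount'⟩ := hP'.choose_spec
    have heS'' : hP'.choose ∈ evProj F chan B ℓ := by rw [hS]; exact heS'
    have hcount'' :
        Set.ncard {e' | e' ∈ evProj F chan B ℓ ∧ B.rel e' hP'.choose ∧ e' ≠ hP'.choose} = n := by
      rw [hset _ heS'']; exact hcount'
    have heq : hP.choose = hP'.choose :=
      count_unique hlin hanti htr hfin' heS heS'' (hcount.trans hcount''.symm)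
    rw [heq]
  · show (if h : _ then _ else _) = (if h : _ then _ else _)
    rw [dif_neg hP, dif_neg (fun h => hP (hiff.mpr h))]
/-- gluing executions across two frames: if `L0` is shared
between `F1` and `F2`, `B_lc` is a `(LEFT0 ∪ lcut0)`-run of `F1`, `B_rc` is a
`(RIGHT2 ∪ lcut0)`-run of `F2`, and they agree on `lcut0`, then some execution
of `F2` restricts to `B_lc` on `LEFT0 ∪ lcut0` and to `B_rc` on
`RIGHT2 ∪ lcut0`. -/
theorem glue_executions (F1 F2 : Frame Loc Chan D) (chan : E → Chan) (msg : E → D)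
    (L0 : Set Loc) (hsh : Shared F1 F2 L0)
    (Blc Brc : EvStruct E)
    (hlc : Blc ∈ lruns F1 chan msg (LEFT0 F1 L0 ∪ lcut0 F1 L0))
    (hrc : Brc ∈ lruns F2 chan msg (RIGHTchans F2 L0 ∪ lcut0 F1 L0))
    (hagree : evRestrict chan Blc (lcut0 F1 L0) = evRestrict chan Brc (lcut0 F1 L0)) :
    ∃ A : EvStruct E, IsExec F2 chan msg A ∧
      evRestrict chan A (LEFT0 F1 L0 ∪ lcut0 F1 L0) = Blc ∧
      evRestrict chan A (RIGHTchans F2 L0 ∪ lcut0 F1 L0) = Brc := by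
  classical
  obtain ⟨A1, hA1, hA1r⟩ := hlc
  obtain ⟨A2, hA2, hA2r⟩ := hrc
  obtain ⟨⟨h1car, h1refl, h1anti, h1trans, h1fin⟩, h1ch, h1loc⟩ := hA1
  obtain ⟨⟨h2car, h2refl, h2anti, h2trans, h2fin⟩, h2ch, h2loc⟩ := hA2
  set lc := lcut0 F1 L0 with hlcdef
  set Clc := LEFT0 F1 L0 ∪ lc with hClcdef
  set Crc := RIGHTchans F2 L0 ∪ lc with hCrcdef
  -- carrier/rel formulas
  have hBc : Blc.carrier = {e | e ∈ A1.carrier ∧ chan e ∈ Clc} := by rw [← hA1r]; rfl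
  have hBr : Blc.rel = fun a b => A1.rel a b ∧ chan a ∈ Clc ∧ chan b ∈ Clc := by
    rw [← hA1r]; rfl
  have hCc : Brc.carrier = {e | e ∈ A2.carrier ∧ chan e ∈ Crc} := by rw [← hA2r]; rfl
  have hCr : Brc.rel = fun a b => A2.rel a b ∧ chan a ∈ Crc ∧ chan b ∈ Crc := by
    rw [← hA2r]; rfl
  -- channel lemmas from sharing
  have hsend : ∀ ℓ ∈ L0,
      {c | c ∈ F1.CH ∧ F1.sender c = ℓ} = {c | c ∈ F2.CH ∧ F2.sender c = ℓ} :=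
    fun ℓ h => (hsh.2.2 ℓ h).1
  have hrecv : ∀ ℓ ∈ L0,
      {c | c ∈ F1.CH ∧ F1.recipt c = ℓ} = {c | c ∈ F2.CH ∧ F2.recipt c = ℓ} :=
    fun ℓ h => (hsh.2.2 ℓ h).2.1
  have s12 : ∀ c, c ∈ F1.CH → F1.sender c ∈ L0 → c ∈ F2.CH ∧ F2.sender c = F1.sender c :=
    fun c h1 h2 => (Set.ext_iff.mp (hsend _ h2) c).mp ⟨h1, rfl⟩
  have s21 : ∀ c, c ∈ F2.CH → F2.sender c ∈ L0 → c ∈ F1.CH ∧ F1.sender c = F2.sender c :=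
    fun c h1 h2 => (Set.ext_iff.mp (hsend _ h2) c).mpr ⟨h1, rfl⟩
  have r12 : ∀ c, c ∈ F1.CH → F1.recipt c ∈ L0 → c ∈ F2.CH ∧ F2.recipt c = F1.recipt c :=
    fun c h1 h2 => (Set.ext_iff.mp (hrecv _ h2) c).mp ⟨h1, rfl⟩
  have r21 : ∀ c, c ∈ F2.CH → F2.recipt c ∈ L0 → c ∈ F1.CH ∧ F1.recipt c = F2.recipt c :=
    fun c h1 h2 => (Set.ext_iff.mp (hrecv _ h2) c).mpr ⟨h1, rfl⟩
  have hClcF1 : Clc ⊆ F1.CH := by rintro c (h | h) <;> exact h.1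
  have hClcF2 : Clc ⊆ F2.CH := by
    rintro c (⟨hc1, hs, _⟩ | ⟨hc1, hx⟩)
    · exact (s12 c hc1 hs).1
    · rcases hx with ⟨hs, _⟩ | ⟨hr, _⟩
      · exact (s12 c hc1 hs).1
      · exact (r12 c hc1 hr).1
  have hCrcF2 : Crc ⊆ F2.CH := by
    rintro c (h | h)
    · exact h.1
    · exact hClcF2 (Or.inr h)
  have send_iff : ∀ c, c ∈ F1.CH → c ∈ F2.CH → ∀ ℓ ∈ L0,
      (F1.sender c = ℓ ↔ F2.sender c = ℓ) := by
    intro c h1 h2 ℓ hℓ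
    constructor
    · intro h; exact ((Set.ext_iff.mp (hsend ℓ hℓ) c).mp ⟨h1, h⟩).2
    · intro h; exact ((Set.ext_iff.mp (hsend ℓ hℓ) c).mpr ⟨h2, h⟩).2
  have recv_iff : ∀ c, c ∈ F1.CH → c ∈ F2.CH → ∀ ℓ ∈ L0,
      (F1.recipt c = ℓ ↔ F2.recipt c = ℓ) := by
    intro c h1 h2 ℓ hℓ
    constructor
    · intro h; exact ((Set.ext_iff.mp (hrecv ℓ hℓ) c).mp ⟨h1, h⟩).2
    · intro h; exact ((Set.ext_iff.mp (hrecv ℓ hℓ) c).mpr ⟨h2, h⟩).2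
  have hClcMem : ∀ c ∈ F2.CH, (F2.sender c ∈ L0 ∨ F2.recipt c ∈ L0) → c ∈ Clc := by
    intro c hc h
    have h1 : c ∈ F1.CH := by
      rcases h with h | h
      · exact (s21 c hc h).1
      · exact (r21 c hc h).1
    have h1' : F1.sender c ∈ L0 ∨ F1.recipt c ∈ L0 := by
      rcases h with h | h
      · left; rw [(s21 c hc h).2]; exact h
      · right; rw [(r21 c hc h).2]; exact h
    by_cases hs : F1.sender c ∈ L0 <;> by_cases hr : F1.recipt c ∈ L0
    · exact Or.inl ⟨h1, hs, hr⟩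
    · exact Or.inr ⟨h1, Or.inl ⟨hs, hr⟩⟩
    · exact Or.inr ⟨h1, Or.inr ⟨hr, hs⟩⟩
    · tauto
  have hCrcMem : ∀ c ∈ F2.CH, (F2.sender c ∉ L0 ∨ F2.recipt c ∉ L0) → c ∈ Crc := by
    intro c hc h
    by_cases hs : F2.sender c ∈ L0 <;> by_cases hr : F2.recipt c ∈ L0
    · tauto
    · right
      obtain ⟨h1, heq⟩ := s21 c hc hs
      refine ⟨h1, Or.inl ⟨by rw [heq]; exact hs, ?_⟩⟩
      intro hr1
      exact hr (by rw [(r12 c h1 hr1).2]; exact hr1)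
    · right
      obtain ⟨h1, heq⟩ := r21 c hc hr
      refine ⟨h1, Or.inr ⟨by rw [heq]; exact hr, ?_⟩⟩
      intro hs1
      exact hs (by rw [(s12 c h1 hs1).2]; exact hs1)
    · left; exact ⟨hc, hs, hr⟩
  have hInter : ∀ c, c ∈ Clc → c ∈ Crc → c ∈ lc := by
    intro c h1 h2
    rcases h1 with h1 | h1
    · rcases h2 with h2 | h2
      · exact absurd (by rw [(s12 c h1.1 h1.2.1).2]; exact h1.2.1 : F2.sender c ∈ L0) h2.2.1
      · exact h2
    · exact h1
  -- event-level lemmas for Blc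
  have LcarC : ∀ e ∈ Blc.carrier, chan e ∈ Clc := by
    intro e he; rw [hBc] at he; exact he.2
  have LcarA1 : ∀ e ∈ Blc.carrier, e ∈ A1.carrier := by
    intro e he; rw [hBc] at he; exact he.1
  have LtoA1 : ∀ a b, Blc.rel a b → A1.rel a b := by
    intro a b h; rw [hBr] at h; exact h.1
  have Lcar : ∀ a b, Blc.rel a b → a ∈ Blc.carrier ∧ b ∈ Blc.carrier := by
    intro a b h; rw [hBr] at h
    obtain ⟨h, ha, hb⟩ := h
    have h' := h1car a b h
    rw [hBc]
    exact ⟨⟨h'.1, ha⟩, ⟨h'.2, hb⟩⟩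
  have Lrefl : ∀ a ∈ Blc.carrier, Blc.rel a a := by
    intro a ha; rw [hBc] at ha; rw [hBr]; exact ⟨h1refl a ha.1, ha.2, ha.2⟩
  have Lanti : ∀ a b, Blc.rel a b → Blc.rel b a → a = b := by
    intro a b h h'; exact h1anti a b (LtoA1 _ _ h) (LtoA1 _ _ h')
  have Ltrans : ∀ a b c, Blc.rel a b → Blc.rel b c → Blc.rel a c := by
    intro a b c h h'; rw [hBr] at h h' ⊢
    exact ⟨h1trans _ _ _ h.1 h'.1, h.2.1, h'.2.2⟩
  have Lfin : ∀ e, {x | Blc.rel x e}.Finite := by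
    intro e
    rcases Set.eq_empty_or_nonempty {x | Blc.rel x e} with h | ⟨x, hx⟩
    · rw [h]; exact Set.finite_empty
    · have he : e ∈ A1.carrier := (h1car x e (LtoA1 x e hx)).2
      exact (h1fin e he).subset (fun y hy => LtoA1 y e hy)
  -- event-level lemmas for Brc
  have RcarC : ∀ e ∈ Brc.carrier, chan e ∈ Crc := by
    intro e he; rw [hCc] at he; exact he.2
  have RcarA2 : ∀ e ∈ Brc.carrier, e ∈ A2.carrier := by
    intro e he; rw [hCc] at he; exact he.1
  have RtoA2 : ∀ a b, Brc.rel a b → A2.rel a b := by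
    intro a b h; rw [hCr] at h; exact h.1
  have Rcar : ∀ a b, Brc.rel a b → a ∈ Brc.carrier ∧ b ∈ Brc.carrier := by
    intro a b h; rw [hCr] at h
    obtain ⟨h, ha, hb⟩ := h
    have h' := h2car a b h
    rw [hCc]
    exact ⟨⟨h'.1, ha⟩, ⟨h'.2, hb⟩⟩
  have Rrefl : ∀ a ∈ Brc.carrier, Brc.rel a a := by
    intro a ha; rw [hCc] at ha; rw [hCr]; exact ⟨h2refl a ha.1, ha.2, ha.2⟩
  have Ranti : ∀ a b, Brc.rel a b → Brc.rel b a → a = b := by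
    intro a b h h'; exact h2anti a b (RtoA2 _ _ h) (RtoA2 _ _ h')
  have Rtrans : ∀ a b c, Brc.rel a b → Brc.rel b c → Brc.rel a c := by
    intro a b c h h'; rw [hCr] at h h' ⊢
    exact ⟨h2trans _ _ _ h.1 h'.1, h.2.1, h'.2.2⟩
  have Rfin : ∀ e, {x | Brc.rel x e}.Finite := by
    intro e
    rcases Set.eq_empty_or_nonempty {x | Brc.rel x e} with h | ⟨x, hx⟩
    · rw [h]; exact Set.finite_empty
    · have he : e ∈ A2.carrier := (h2car x e (RtoA2 x e hx)).2
      exact (h2fin e he).subset (fun y hy => RtoA2 y e hy)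
  -- agreement lemmas
  have agree_carLR : ∀ e, e ∈ Blc.carrier → chan e ∈ lc → e ∈ Brc.carrier := by
    intro e h1 h2
    have h : e ∈ (evRestrict chan Blc lc).carrier := ⟨h1, h2⟩
    rw [hagree] at h
    exact h.1
  have agree_carRL : ∀ e, e ∈ Brc.carrier → chan e ∈ lc → e ∈ Blc.carrier := by
    intro e h1 h2
    have h : e ∈ (evRestrict chan Brc lc).carrier := ⟨h1, h2⟩
    rw [← hagree] at h
    exact h.1
  have agree_relRL : ∀ a b, Brc.rel a b → chan a ∈ lc → chan b ∈ lc → Blc.rel a b := by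
    intro a b h ha hb
    have h' : (evRestrict chan Brc lc).rel a b := ⟨h, ha, hb⟩
    rw [← hagree] at h'
    exact h'.1
  have agree_relLR : ∀ a b, Blc.rel a b → chan a ∈ lc → chan b ∈ lc → Brc.rel a b := by
    intro a b h ha hb
    have h' : (evRestrict chan Blc lc).rel a b := ⟨h, ha, hb⟩
    rw [hagree] at h'
    exact h'.1
  have cross : ∀ e, e ∈ Blc.carrier → e ∈ Brc.carrier → chan e ∈ lc :=
    fun e h1 h2 => hInter _ (LcarC e h1) (RcarC e h2)
  have collapseR : ∀ p q, Brc.rel p q → p ∈ Blc.carrier → q ∈ Blc.carrier → Blc.rel p q := by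
    intro p q h hp hq
    obtain ⟨hp', hq'⟩ := Rcar p q h
    exact agree_relRL p q h (cross p hp hp') (cross q hq hq')
  have collapseL : ∀ p q, Blc.rel p q → p ∈ Brc.carrier → q ∈ Brc.carrier → Brc.rel p q := by
    intro p q h hp hq
    obtain ⟨hp', hq'⟩ := Lcar p q h
    exact agree_relLR p q h (cross p hp' hp) (cross q hq' hq)
  -- the glued structure
  set U : Set E := Blc.carrier ∪ Brc.carrier with hUdef
  set R : E → E → Prop := fun a b => Blc.rel a b ∨ Brc.rel a b with hRdef
  set A : EvStruct E := ⟨U, Relation.TransGen R⟩ with hAdef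
  have Rcar' : ∀ a b, R a b → a ∈ U ∧ b ∈ U := by
    rintro a b (h | h)
    · obtain ⟨h1, h2⟩ := Lcar a b h; exact ⟨Or.inl h1, Or.inl h2⟩
    · obtain ⟨h1, h2⟩ := Rcar a b h; exact ⟨Or.inr h1, Or.inr h2⟩
  have TGcar : ∀ a b, Relation.TransGen R a b → a ∈ U ∧ b ∈ U := by
    intro a b h
    induction h with
    | single h => exact Rcar' _ _ h
    | tail _ h ih => exact ⟨ih.1, (Rcar' _ _ h).2⟩
  -- normal forms
  set N : E → E → Prop := fun a b => Blc.rel a b ∨ Brc.rel a b ∨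
    (∃ p, Blc.rel a p ∧ Brc.rel p b) ∨ (∃ p, Brc.rel a p ∧ Blc.rel p b) ∨
    (∃ p q, Brc.rel a p ∧ Blc.rel p q ∧ Brc.rel q b) with hNdef
  have Nstep : ∀ a b c, N a b → R b c → N a c := by
    rintro a b c hab (hbc | hbc)
    · rcases hab with h | h | ⟨p, h1, h2⟩ | ⟨p, h1, h2⟩ | ⟨p, q, h1, h2, h3⟩
      · exact Or.inl (Ltrans _ _ _ h hbc)
      · exact Or.inr (Or.inr (Or.inr (Or.inl ⟨b, h, hbc⟩)))
      · have hb : b ∈ Blc.carrier := (Lcar _ _ hbc).1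
        have hp : p ∈ Blc.carrier := (Lcar _ _ h1).2
        exact Or.inl (Ltrans _ _ _ h1 (Ltrans _ _ _ (collapseR p b h2 hp hb) hbc))
      · exact Or.inr (Or.inr (Or.inr (Or.inl ⟨p, h1, Ltrans _ _ _ h2 hbc⟩)))
      · have hq : q ∈ Blc.carrier := (Lcar _ _ h2).2
        have hb : b ∈ Blc.carrier := (Lcar _ _ hbc).1
        exact Or.inr (Or.inr (Or.inr (Or.inl
          ⟨p, h1, Ltrans _ _ _ h2 (Ltrans _ _ _ (collapseR q b h3 hq hb) hbc)⟩)))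
    · rcases hab with h | h | ⟨p, h1, h2⟩ | ⟨p, h1, h2⟩ | ⟨p, q, h1, h2, h3⟩
      · exact Or.inr (Or.inr (Or.inl ⟨b, h, hbc⟩))
      · exact Or.inr (Or.inl (Rtrans _ _ _ h hbc))
      · exact Or.inr (Or.inr (Or.inl ⟨p, h1, Rtrans _ _ _ h2 hbc⟩))
      · exact Or.inr (Or.inr (Or.inr (Or.inr ⟨p, b, h1, h2, hbc⟩)))
      · exact Or.inr (Or.inr (Or.inr (Or.inr ⟨p, q, h1, h2, Rtrans _ _ _ h3 hbc⟩)))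
  have NofTG : ∀ a b, Relation.TransGen R a b → N a b := by
    intro a b h
    induction h with
    | single h =>
        rcases h with h | h
        · exact Or.inl h
        · exact Or.inr (Or.inl h)
    | tail _ h ih => exact Nstep _ _ _ ih h
  -- coherence
  have cohL : ∀ a b, Relation.TransGen R a b →
      a ∈ Blc.carrier → b ∈ Blc.carrier → Blc.rel a b := by
    intro a b h ha hb
    rcases NofTG a b h with h | h | ⟨p, h1, h2⟩ | ⟨p, h1, h2⟩ | ⟨p, q, h1, h2, h3⟩
    · exact h
    · exact collapseR a b h ha hb
    · exact Ltrans _ _ _ h1 (collapseR p b h2 (Lcar _ _ h1).2 hb)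
    · exact Ltrans _ _ _ (collapseR a p h1 ha (Lcar _ _ h2).1) h2
    · exact Ltrans _ _ _ (collapseR a p h1 ha (Lcar _ _ h2).1)
        (Ltrans _ _ _ h2 (collapseR q b h3 (Lcar _ _ h2).2 hb))
  have cohR : ∀ a b, Relation.TransGen R a b →
      a ∈ Brc.carrier → b ∈ Brc.carrier → Brc.rel a b := by
    intro a b h ha hb
    rcases NofTG a b h with h | h | ⟨p, h1, h2⟩ | ⟨p, h1, h2⟩ | ⟨p, q, h1, h2, h3⟩
    · exact collapseL a b h ha hb
    · exact h
    · exact Rtrans _ _ _ (collapseL a p h1 ha (Rcar _ _ h2).1) h2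
    · exact Rtrans _ _ _ h1 (collapseL p b h2 (Rcar _ _ h1).2 hb)
    · exact Rtrans _ _ _ h1
        (Rtrans _ _ _ (collapseL p q h2 (Rcar _ _ h1).2 (Rcar _ _ h3).1) h3)
  -- antisymmetry
  have TGanti : ∀ a b, Relation.TransGen R a b → Relation.TransGen R b a → a = b := by
    intro a b hab hba
    have haU := (TGcar _ _ hab).1
    have hbU := (TGcar _ _ hab).2
    by_cases haL : a ∈ Blc.carrier
    · by_cases hbL : b ∈ Blc.carrier
      · exact Lanti _ _ (cohL _ _ hab haL hbL) (cohL _ _ hba hbL haL)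
      · have hbR : b ∈ Brc.carrier := hbU.resolve_left hbL
        by_cases haR : a ∈ Brc.carrier
        · exact Ranti _ _ (cohR _ _ hab haR hbR) (cohR _ _ hba hbR haR)
        · exfalso
          obtain ⟨p, hap, hpb⟩ : ∃ p, Blc.rel a p ∧ Brc.rel p b := by
            rcases NofTG a b hab with h | h | h | ⟨p, h1, h2⟩ | ⟨p, q, h1, h2, h3⟩
            · exact absurd (Lcar _ _ h).2 hbL
            · exact absurd (Rcar _ _ h).1 haR
            · exact h
            · exact absurd (Rcar _ _ h1).1 haR
            · exact absurd (Rcar _ _ h1).1 haR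
          obtain ⟨q, hbq, hqa⟩ : ∃ q, Brc.rel b q ∧ Blc.rel q a := by
            rcases NofTG b a hba with h | h | ⟨p, h1, h2⟩ | h | ⟨p, q, h1, h2, h3⟩
            · exact absurd (Lcar _ _ h).1 hbL
            · exact absurd (Rcar _ _ h).2 haR
            · exact absurd (Lcar _ _ h1).1 hbL
            · exact h
            · exact absurd (Rcar _ _ h3).2 haR
          have hpq : Brc.rel p q := Rtrans _ _ _ hpb hbq
          have hpq' : Blc.rel p q := collapseR p q hpq (Lcar _ _ hap).2 (Lcar _ _ hqa).1
          have heq : a = p := Lanti _ _ hap (Ltrans _ _ _ hpq' hqa)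
          exact haR (heq.symm ▸ (Rcar _ _ hpb).1)
    · have haR : a ∈ Brc.carrier := haU.resolve_left haL
      by_cases hbR : b ∈ Brc.carrier
      · exact Ranti _ _ (cohR _ _ hab haR hbR) (cohR _ _ hba hbR haR)
      · have hbL' : b ∈ Blc.carrier := hbU.resolve_right hbR
        exfalso
        obtain ⟨p, hap, hpb⟩ : ∃ p, Brc.rel a p ∧ Blc.rel p b := by
          rcases NofTG a b hab with h | h | ⟨p, h1, h2⟩ | h | ⟨p, q, h1, h2, h3⟩
          · exact absurd (Lcar _ _ h).1 haL
          · exact absurd (Rcar _ _ h).2 hbR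
          · exact absurd (Lcar _ _ h1).1 haL
          · exact h
          · exact absurd (Rcar _ _ h3).2 hbR
        obtain ⟨q, hbq, hqa⟩ : ∃ q, Blc.rel b q ∧ Brc.rel q a := by
          rcases NofTG b a hba with h | h | h | ⟨p, h1, h2⟩ | ⟨p, q, h1, h2, h3⟩
          · exact absurd (Lcar _ _ h).2 haL
          · exact absurd (Rcar _ _ h).1 hbR
          · exact h
          · exact absurd (Rcar _ _ h1).1 hbR
          · exact absurd (Rcar _ _ h1).1 hbR
        have hpq : Blc.rel p q := Ltrans _ _ _ hpb hbq
        have hpq' : Brc.rel p q := collapseL p q hpq (Rcar _ _ hap).2 (Rcar _ _ hqa).1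
        have heq : a = p := Ranti _ _ hap (Rtrans _ _ _ hpq' hqa)
        exact haL (heq.symm ▸ (Lcar _ _ hpb).1)
  -- finiteness of predecessors
  have TGfin : ∀ e, {x | Relation.TransGen R x e}.Finite := by
    intro e
    have hsub : {x | Relation.TransGen R x e} ⊆
        (((({x | Blc.rel x e} ∪ {x | Brc.rel x e})
        ∪ (⋃ p ∈ {p | Brc.rel p e}, {x | Blc.rel x p}))
        ∪ (⋃ p ∈ {p | Blc.rel p e}, {x | Brc.rel x p}))
        ∪ (⋃ q ∈ {q | Brc.rel q e}, ⋃ p ∈ {p | Blc.rel p q}, {x | Brc.rel x p})) := by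
      intro x hx
      rcases NofTG x e hx with h | h | ⟨p, h1, h2⟩ | ⟨p, h1, h2⟩ | ⟨p, q, h1, h2, h3⟩
      · exact Or.inl (Or.inl (Or.inl (Or.inl h)))
      · exact Or.inl (Or.inl (Or.inl (Or.inr h)))
      · exact Or.inl (Or.inl (Or.inr (Set.mem_biUnion h2 h1)))
      · exact Or.inl (Or.inr (Set.mem_biUnion h2 h1))
      · exact Or.inr (Set.mem_biUnion h3 (Set.mem_biUnion h2 h1))
    refine Set.Finite.subset ?_ hsub
    refine ((((Lfin e).union (Rfin e)).union ?_).union ?_).union ?_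
    · exact (Rfin e).biUnion (fun p _ => Lfin p)
    · exact (Lfin e).biUnion (fun p _ => Rfin p)
    · exact (Rfin e).biUnion (fun q _ => (Lfin q).biUnion (fun p _ => Rfin p))
  have TGrefl : ∀ a ∈ U, Relation.TransGen R a a := by
    rintro a (ha | ha)
    · exact Relation.TransGen.single (Or.inl (Lrefl a ha))
    · exact Relation.TransGen.single (Or.inr (Rrefl a ha))
  have hchan2 : ∀ e ∈ U, chan e ∈ F2.CH := by
    rintro e (he | he)
    · exact hClcF2 (LcarC e he)
    · exact hCrcF2 (RcarC e he)
  have hsys : IsSysEv A :=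
    ⟨TGcar, TGrefl, TGanti, fun a b c h h' => h.trans h', fun a _ => TGfin a⟩
  -- location conditions
  have hloc : ∀ ℓ ∈ F2.LO,
      (∀ a ∈ evProj F2 chan A ℓ, ∀ b ∈ evProj F2 chan A ℓ, A.rel a b ∨ A.rel b a) ∧
      projSeq F2 chan msg A ℓ ∈ F2.traces ℓ := by
    intro ℓ hℓ
    by_cases hL : ℓ ∈ L0
    · -- shared location: compare with A1 in F1
      have memB : ∀ e ∈ evProj F2 chan A ℓ, e ∈ Blc.carrier := by
        intro e he
        obtain ⟨heU, hend⟩ := he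
        have hch : chan e ∈ F2.CH := hchan2 e heU
        have hcl : chan e ∈ Clc := by
          apply hClcMem _ hch
          rcases hend with h | h
          · exact Or.inl (by rw [h]; exact hL)
          · exact Or.inr (by rw [h]; exact hL)
        rcases heU with h | h
        · exact h
        · exact agree_carRL e h (hInter _ hcl (RcarC e h))
      have hproj : evProj F2 chan A ℓ = evProj F1 chan A1 ℓ := by
        ext e
        constructor
        · intro he
          have heB := memB e he
          obtain ⟨heU, hend⟩ := he
          refine ⟨LcarA1 e heB, ?_⟩
          have hc1 : chan e ∈ F1.CH := hClcF1 (LcarC e heB)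
          have hc2 : chan e ∈ F2.CH := hchan2 e heU
          rcases hend with h | h
          · exact Or.inl ((send_iff _ hc1 hc2 ℓ hL).mpr h)
          · exact Or.inr ((recv_iff _ hc1 hc2 ℓ hL).mpr h)
        · intro he
          obtain ⟨heA1, hend⟩ := he
          have hc1 : chan e ∈ F1.CH := h1ch e heA1
          have hcl : chan e ∈ Clc := by
            by_cases hs : F1.sender (chan e) ∈ L0 <;> by_cases hr : F1.recipt (chan e) ∈ L0
            · exact Or.inl ⟨hc1, hs, hr⟩
            · exact Or.inr ⟨hc1, Or.inl ⟨hs, hr⟩⟩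
            · exact Or.inr ⟨hc1, Or.inr ⟨hr, hs⟩⟩
            · exfalso
              rcases hend with h | h
              · exact hs (by rw [h]; exact hL)
              · exact hr (by rw [h]; exact hL)
          have heB : e ∈ Blc.carrier := by rw [hBc]; exact ⟨heA1, hcl⟩
          refine ⟨Or.inl heB, ?_⟩
          have hc2 : chan e ∈ F2.CH := hClcF2 hcl
          rcases hend with h | h
          · exact Or.inl ((send_iff _ hc1 hc2 ℓ hL).mp h)
          · exact Or.inr ((recv_iff _ hc1 hc2 ℓ hL).mp h)
      have hrel_iff : ∀ a ∈ evProj F2 chan A ℓ, ∀ b ∈ evProj F2 chan A ℓ,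
          (A.rel a b ↔ A1.rel a b) := by
        intro a ha b hb
        have haB := memB a ha
        have hbB := memB b hb
        constructor
        · intro h; exact LtoA1 _ _ (cohL _ _ h haB hbB)
        · intro h
          have h' : Blc.rel a b := by rw [hBr]; exact ⟨h, LcarC a haB, LcarC b hbB⟩
          exact Relation.TransGen.single (Or.inl h')
      have hlin : ∀ a ∈ evProj F2 chan A ℓ, ∀ b ∈ evProj F2 chan A ℓ,
          A.rel a b ∨ A.rel b a := by
        intro a ha b hb
        have ha1 : a ∈ evProj F1 chan A1 ℓ := by rw [← hproj]; exact ha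
        have hb1 : b ∈ evProj F1 chan A1 ℓ := by rw [← hproj]; exact hb
        rcases (h1loc ℓ (hsh.1 hL)).1 a ha1 b hb1 with h | h
        · exact Or.inl ((hrel_iff a ha b hb).mpr h)
        · exact Or.inr ((hrel_iff b hb a ha).mpr h)
      refine ⟨hlin, ?_⟩
      have hps := projSeq_congr (msg := msg) hproj hrel_iff hlin TGanti
        (fun a b c h h' => h.trans h') (fun a _ => TGfin a)
      rw [hps, ← (hsh.2.2 ℓ hL).2.2]
      exact (h1loc ℓ (hsh.1 hL)).2
    · -- non-shared location: compare with A2 in F2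
      have memC : ∀ e ∈ evProj F2 chan A ℓ, e ∈ Brc.carrier := by
        intro e he
        obtain ⟨heU, hend⟩ := he
        have hch : chan e ∈ F2.CH := hchan2 e heU
        have hcr : chan e ∈ Crc := by
          apply hCrcMem _ hch
          rcases hend with h | h
          · exact Or.inl (by rw [h]; exact hL)
          · exact Or.inr (by rw [h]; exact hL)
        rcases heU with h | h
        · exact agree_carLR e h (hInter _ (LcarC e h) hcr)
        · exact h
      have hproj : evProj F2 chan A ℓ = evProj F2 chan A2 ℓ := by
        ext e
        constructor
        · intro he
          exact ⟨RcarA2 e (memC e he), he.2⟩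
        · intro he
          obtain ⟨heA2, hend⟩ := he
          have hch : chan e ∈ F2.CH := h2ch e heA2
          have hcr : chan e ∈ Crc := by
            apply hCrcMem _ hch
            rcases hend with h | h
            · exact Or.inl (by rw [h]; exact hL)
            · exact Or.inr (by rw [h]; exact hL)
          have heC : e ∈ Brc.carrier := by rw [hCc]; exact ⟨heA2, hcr⟩
          exact ⟨Or.inr heC, hend⟩
      have hrel_iff : ∀ a ∈ evProj F2 chan A ℓ, ∀ b ∈ evProj F2 chan A ℓ,
          (A.rel a b ↔ A2.rel a b) := by
        intro a ha b hb
        have haC := memC a ha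
        have hbC := memC b hb
        constructor
        · intro h; exact RtoA2 _ _ (cohR _ _ h haC hbC)
        · intro h
          have h' : Brc.rel a b := by rw [hCr]; exact ⟨h, RcarC a haC, RcarC b hbC⟩
          exact Relation.TransGen.single (Or.inr h')
      have hlin : ∀ a ∈ evProj F2 chan A ℓ, ∀ b ∈ evProj F2 chan A ℓ,
          A.rel a b ∨ A.rel b a := by
        intro a ha b hb
        have ha2 : a ∈ evProj F2 chan A2 ℓ := by rw [← hproj]; exact ha
        have hb2 : b ∈ evProj F2 chan A2 ℓ := by rw [← hproj]; exact hb
        rcases (h2loc ℓ hℓ).1 a ha2 b hb2 with h | h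
        · exact Or.inl ((hrel_iff a ha b hb).mpr h)
        · exact Or.inr ((hrel_iff b hb a ha).mpr h)
      refine ⟨hlin, ?_⟩
      have hps := projSeq_congr (msg := msg) hproj hrel_iff hlin TGanti
        (fun a b c h h' => h.trans h') (fun a _ => TGfin a)
      rw [hps]
      exact (h2loc ℓ hℓ).2
  -- restrictions
  have memBofU : ∀ e ∈ U, chan e ∈ Clc → e ∈ Blc.carrier := by
    rintro e (h | h) hcl
    · exact h
    · exact agree_carRL e h (hInter _ hcl (RcarC e h))
  have memCofU : ∀ e ∈ U, chan e ∈ Crc → e ∈ Brc.carrier := by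
    rintro e (h | h) hcr
    · exact agree_carLR e h (hInter _ (LcarC e h) hcr)
    · exact h
  have hAClc : evRestrict chan A Clc = Blc := by
    apply evStruct_ext
    · ext e
      constructor
      · rintro ⟨heU, hcl⟩
        exact memBofU e heU hcl
      · intro h
        exact ⟨Or.inl h, LcarC e h⟩
    · funext a b
      apply propext
      constructor
      · rintro ⟨h, ha, hb⟩
        have haB : a ∈ Blc.carrier := memBofU a (TGcar _ _ h).1 ha
        have hbB : b ∈ Blc.carrier := memBofU b (TGcar _ _ h).2 hb
        exact cohL _ _ h haB hbB
      · intro h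
        obtain ⟨h1, h2⟩ := Lcar _ _ h
        exact ⟨Relation.TransGen.single (Or.inl h), LcarC _ h1, LcarC _ h2⟩
  have hACrc : evRestrict chan A Crc = Brc := by
    apply evStruct_ext
    · ext e
      constructor
      · rintro ⟨heU, hcr⟩
        exact memCofU e heU hcr
      · intro h
        exact ⟨Or.inr h, RcarC e h⟩
    · funext a b
      apply propext
      constructor
      · rintro ⟨h, ha, hb⟩
        have haC : a ∈ Brc.carrier := memCofU a (TGcar _ _ h).1 ha
        have hbC : b ∈ Brc.carrier := memCofU b (TGcar _ _ h).2 hb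
        exact cohR _ _ h haC hbC
      · intro h
        obtain ⟨h1, h2⟩ := Rcar _ _ h
        exact ⟨Relation.TransGen.single (Or.inr h), RcarC _ h1, RcarC _ h2⟩
  exact ⟨A, ⟨hsys, hchan2, hloc⟩, hAClc, hACrc⟩
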